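/- Let R be a PID, ℘ a set of primes of R, and A* a cochain complex of R-modules. Let Q* = A*/τ^℘_{≤0}A* be the quotient complex by the torsion-tipped truncation. Then H^i(Q*) = 0 for i ≤ 0, and H^1(Q*) ≅ H^1(A*)/T^℘H^1(A*); in particular H^1(Q*) is ℘-torsion free. -/
import Mathlib


/-- The `℘`-torsion submodule `T^℘M`. -/
def ptorsion (R : Type) [CommRing R] (℘ : Set R)
    (M : Type) [AddCommGroup M] [Module R M] : Submodule R M where
  carrier := {x : M | ∃ n ∈ Submonoid.closure ℘, n • x = 0}
  zero_mem' := ⟨1, Submonoid.one_mem _, smul_zero 1⟩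
  add_mem' := by
    rintro x y ⟨m, hm, hx⟩ ⟨n, hn, hy⟩
    refine ⟨m * n, mul_mem hm hn, ?_⟩
    have h1 : (m * n) • x = 0 := by rw [mul_comm, mul_smul, hx, smul_zero]
    have h2 : (m * n) • y = 0 := by rw [mul_smul, hy, smul_zero]
    rw [smul_add, h1, h2, add_zero]
  smul_mem' := by
    rintro c x ⟨n, hn, hx⟩
    exact ⟨n, hn, by rw [← mul_smul, mul_comm, mul_smul, hx, smul_zero]⟩

/-- The cohomology `H^i = ker(d^i)/im(d^{i-1})` of a `ℤ`-indexed cochain complex of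
`R`-modules, presented with a two-index differential `d i j : A i → A j` (zero unless
`j = i + 1`). -/
abbrev cohomologyAt (R : Type) [CommRing R] (A : ℤ → Type)
    [∀ i, AddCommGroup (A i)] [∀ i, Module R (A i)]
    (d : ∀ i j : ℤ, A i →ₗ[R] A j) (i : ℤ) : Type :=
  ↥(LinearMap.ker (d i (i + 1))) ⧸
    (Submodule.comap (LinearMap.ker (d i (i + 1))).subtype
      (LinearMap.range (d (i - 1) i)))

/-- (Cohomology of the quotient by the torsion-tipped truncation.)  Let `A` be a
cochain complex of `R`-modules and let `Q = A/τ^℘_{≤0}A`: a cochain complex with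
degreewise surjections `π i : A i → Q i` commuting with the differentials, whose
kernel in degree `i` is all of `A i` for `i ≤ 0`, the weak `℘`-boundaries
`W^℘A^1 = { s : ∃ n ∈ S(℘), n • s ∈ im d }` in degree `1`, and `0` above.  Then
`H^i(Q) = 0` for `i ≤ 0`, and `H^1(Q) ≅ H^1(A)/T^℘H^1(A)`; in particular `H^1(Q)` is
`℘`-torsion free. -/
theorem cohomology_of_quotient_by_truncation
    (R : Type) [CommRing R] [IsDomain R] [IsPrincipalIdealRing R]
    (℘ : Set R) (h℘ : ∀ p ∈ ℘, Prime p)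
    (A : ℤ → Type) [∀ i, AddCommGroup (A i)] [∀ i, Module R (A i)]
    (d : ∀ i j : ℤ, A i →ₗ[R] A j)
    (hdshape : ∀ i j : ℤ, j ≠ i + 1 → d i j = 0)
    (hdd : ∀ i j l : ℤ, (d j l).comp (d i j) = 0)
    (Q : ℤ → Type) [∀ i, AddCommGroup (Q i)] [∀ i, Module R (Q i)]
    (dQ : ∀ i j : ℤ, Q i →ₗ[R] Q j)
    (hQshape : ∀ i j : ℤ, j ≠ i + 1 → dQ i j = 0)
    (hQQ : ∀ i j l : ℤ, (dQ j l).comp (dQ i j) = 0)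
    (π : ∀ i : ℤ, A i →ₗ[R] Q i)
    (hsurj : ∀ i : ℤ, Function.Surjective (π i))
    (hcomm : ∀ i j : ℤ, (dQ i j).comp (π i) = (π j).comp (d i j))
    (hker : ∀ (i : ℤ) (s : A i), π i s = 0 ↔
      (i ≤ 0 ∨ (i = 1 ∧ ∃ n ∈ Submonoid.closure ℘,
          n • s ∈ LinearMap.range (d (i - 1) i)) ∨ s = 0)) :
    (∀ i : ℤ, i ≤ 0 → Subsingleton (cohomologyAt R Q dQ i)) ∧
    Nonempty ((cohomologyAt R Q dQ 1) ≃ₗ[R]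
      ((cohomologyAt R A d 1) ⧸ ptorsion R ℘ (cohomologyAt R A d 1))) ∧
    ptorsion R ℘ (cohomologyAt R Q dQ 1) = ⊥ := by

  classical
  -- `Q i` is trivial for `i ≤ 0`
  have hQtriv : ∀ i : ℤ, i ≤ 0 → ∀ q : Q i, q = 0 := by
    intro i hi q
    obtain ⟨s, rfl⟩ := hsurj i q
    exact (hker i s).mpr (Or.inl hi)
  -- `π 2` is injective
  have hπ2inj : Function.Injective (π (1 + 1)) := by
    intro a b hab
    have h0 : π (1 + 1) (a - b) = 0 := by rw [map_sub, hab, sub_self]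
    rcases (hker (1 + 1) (a - b)).mp h0 with h | h | h
    · exfalso; omega
    · exfalso; omega
    · exact sub_eq_zero.mp h
  -- abbreviations
  set M := LinearMap.ker (d 1 (1 + 1)) with hM
  set N : Submodule R M := Submodule.comap M.subtype (LinearMap.range (d (1 - 1) 1)) with hN
  set pt := ptorsion R ℘ (cohomologyAt R A d 1) with hpt
  set T : Submodule R M := Submodule.comap N.mkQ pt with hT
  -- the map f : ker(d 1 2) → ker(dQ 1 2)
  have hmem : ∀ s : M, π 1 (s : A 1) ∈ LinearMap.ker (dQ 1 (1 + 1)) := by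
    intro s
    have h1 : dQ 1 (1 + 1) (π 1 (s : A 1)) = π (1 + 1) (d 1 (1 + 1) (s : A 1)) :=
      LinearMap.ext_iff.mp (hcomm 1 (1 + 1)) (s : A 1)
    have h2 : d 1 (1 + 1) (s : A 1) = 0 := s.2
    simp only [LinearMap.mem_ker, h1, h2, map_zero]
  set f : M →ₗ[R] LinearMap.ker (dQ 1 (1 + 1)) :=
    LinearMap.codRestrict (LinearMap.ker (dQ 1 (1 + 1)))
      ((π 1).comp M.subtype) hmem with hf
  have hfsurj : Function.Surjective f := by
    rintro ⟨q, hq⟩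
    obtain ⟨s, hs⟩ := hsurj 1 q
    have hds : d 1 (1 + 1) s = 0 := by
      apply hπ2inj
      have h1 : dQ 1 (1 + 1) (π 1 s) = π (1 + 1) (d 1 (1 + 1) s) :=
        LinearMap.ext_iff.mp (hcomm 1 (1 + 1)) s
      rw [map_zero, ← h1, hs]
      exact hq
    exact ⟨⟨s, hds⟩, Subtype.ext hs⟩
  have hkerf : LinearMap.ker f = T := by
    ext s
    constructor
    · intro hs
      have h1 : π 1 (s : A 1) = 0 := Subtype.ext_iff.mp (LinearMap.mem_ker.mp hs)
      rcases (hker 1 (s : A 1)).mp h1 with h | h | h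
      · exfalso; omega
      · obtain ⟨-, n, hn, hns⟩ := h
        refine ⟨n, hn, ?_⟩
        show n • N.mkQ s = 0
        rw [← map_smul, Submodule.mkQ_apply, Submodule.Quotient.mk_eq_zero]
        exact hns
      · have : s = 0 := Subtype.ext h
        rw [this]
        exact T.zero_mem
    · rintro ⟨n, hn, hns⟩
      have h2 : n • N.mkQ s = 0 := hns
      rw [← map_smul, Submodule.mkQ_apply, Submodule.Quotient.mk_eq_zero] at h2
      have h3 : n • (s : A 1) ∈ LinearMap.range (d (1 - 1) 1) := h2
      have h1 : π 1 (s : A 1) = 0 :=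
        (hker 1 (s : A 1)).mpr (Or.inr (Or.inl ⟨rfl, n, hn, h3⟩))
      exact LinearMap.mem_ker.mpr (Subtype.ext h1)
  have hNT : N ≤ T := by
    intro x hx
    have h0 : N.mkQ x = 0 := (Submodule.Quotient.mk_eq_zero N).mpr hx
    show N.mkQ x ∈ pt
    rw [h0]
    exact pt.zero_mem
  have hmapeq : T.map N.mkQ = pt :=
    Submodule.map_comap_eq_self (by rw [Submodule.range_mkQ]; exact le_top)
  -- assemble the equivalence
  have hbot : Submodule.comap (LinearMap.ker (dQ 1 (1 + 1))).subtype
      (LinearMap.range (dQ (1 - 1) 1)) = ⊥ := by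
    rw [eq_bot_iff]
    rintro ⟨x, hx⟩ hmem'
    obtain ⟨y, hy⟩ := hmem'
    have : y = 0 := hQtriv (1 - 1) (by omega) y
    rw [this, map_zero] at hy
    exact (Submodule.mem_bot R).mpr (Subtype.ext hy.symm)
  have e1 : cohomologyAt R Q dQ 1 ≃ₗ[R] LinearMap.ker (dQ 1 (1 + 1)) :=
    Submodule.quotEquivOfEqBot _ hbot
  have e2 : (LinearMap.ker (dQ 1 (1 + 1)) : Type) ≃ₗ[R] (M ⧸ LinearMap.ker f) :=
    (f.quotKerEquivOfSurjective hfsurj).symm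
  have e3 : (M ⧸ LinearMap.ker f) ≃ₗ[R] (M ⧸ T) :=
    Submodule.quotEquivOfEq _ _ hkerf
  have e4 : (M ⧸ T) ≃ₗ[R] ((cohomologyAt R A d 1) ⧸ pt) :=
    (Submodule.quotientQuotientEquivQuotient N T hNT).symm.trans
      (Submodule.quotEquivOfEq _ _ hmapeq)
  have e : cohomologyAt R Q dQ 1 ≃ₗ[R] ((cohomologyAt R A d 1) ⧸ pt) :=
    e1.trans (e2.trans (e3.trans e4))
  -- the quotient by the torsion submodule is torsion free
  have htf : ∀ x : cohomologyAt R Q dQ 1,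
      x ∈ ptorsion R ℘ (cohomologyAt R Q dQ 1) → x = 0 := by
    rintro x ⟨n, hn, hnx⟩
    have h1 : n • e x = 0 := by rw [← map_smul, hnx, map_zero]
    obtain ⟨y, hy⟩ := Submodule.Quotient.mk_surjective pt (e x)
    have h2 : pt.mkQ (n • y) = 0 := by
      rw [map_smul, Submodule.mkQ_apply, hy, h1]
    rw [Submodule.mkQ_apply, Submodule.Quotient.mk_eq_zero] at h2
    obtain ⟨m, hm, hmy⟩ := h2
    have h3 : y ∈ pt := ⟨m * n, mul_mem hm hn, by rw [mul_smul]; exact hmy⟩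
    have h4 : e x = 0 := by
      rw [← hy, Submodule.Quotient.mk_eq_zero]
      exact h3
    have := e.injective (by rw [h4, map_zero] : e x = e 0)
    exact this
  refine ⟨?_, ⟨e⟩, ?_⟩
  · intro i hi
    haveI : Subsingleton (Q i) := ⟨fun a b => by rw [hQtriv i hi a, hQtriv i hi b]⟩
    refine ⟨fun a b => ?_⟩
    obtain ⟨x, rfl⟩ := Submodule.Quotient.mk_surjective _ a
    obtain ⟨y, rfl⟩ := Submodule.Quotient.mk_surjective _ b
    exact congrArg _ (Subsingleton.elim x y)
  · rw [eq_bot_iff]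
    intro x hx
    exact (Submodule.mem_bot R).mpr (htf x hx)
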